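/- arXiv:0710.5915 — 2 statements merged into one kernel-verified Lean document; each statement's English description precedes it below -/
import Mathlib

section
/- (Strauss radial lemma) Let N ≥ 3. There is a constant C > 0 such that for every radial function f ∈ H¹(ℝ^N) and every x with |x| ≥ 1, |f(x)| ≤ C |x|^{−(N−1)/2} ‖f‖_{L^2}^{1/2} ‖∇f‖_{L^2}^{1/2}. -/
/-!
Write `f x = u ‖x‖` and let `c = N · vol (ball 0 1)` be the area of the unit sphere. In polar
coordinates `∫ f² = c ∫₀^∞ sᴺ⁻¹ u²`, and since `|u' ‖x‖| ≤ ‖Df x‖` also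
`c ∫₀^∞ sᴺ⁻¹ u'² ≤ ∫ ‖Df‖²`. For `φ s = sᴺ⁻¹ u(s)²` both `φ` and `φ'` are integrable on `(r, ∞)`,
so `φ → 0` at infinity and, dropping the nonnegative term `(N - 1) sᴺ⁻² u²` of `φ'`,
`rᴺ⁻¹ u(r)² = -∫ᵣ^∞ φ' ≤ -2 ∫ᵣ^∞ sᴺ⁻¹ u u' ≤ 2 (∫ᵣ^∞ sᴺ⁻¹ u²)^½ (∫ᵣ^∞ sᴺ⁻¹ u'²)^½`
by Cauchy–Schwarz. This gives the bound for every `x ≠ 0`, with `C = (2 / c)^½`.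
-/

open Set MeasureTheory Metric

local notation "dim" => Module.finrank ℝ

theorem abs_integral_mul_le_sqrt_mul_sqrt {α : Type*} [MeasurableSpace α] {μ : Measure α}
    {f g : α → ℝ} (hf : MemLp f 2 μ) (hg : MemLp g 2 μ) :
    |∫ a, f a * g a ∂μ| ≤ √(∫ a, f a ^ 2 ∂μ) * √(∫ a, g a ^ 2 ∂μ) := by
  have hrpow : ∀ h : α → ℝ, ∫ a, |h a| ^ (2 : ℝ) ∂μ = ∫ a, h a ^ 2 ∂μ := fun h => by
    simp_rw [Real.rpow_two, sq_abs]
  calc |∫ a, f a * g a ∂μ| ≤ ∫ a, |f a| * |g a| ∂μ := by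
        simpa only [abs_mul] using abs_integral_le_integral_abs (f := fun a => f a * g a) (μ := μ)
    _ ≤ (∫ a, |f a| ^ (2 : ℝ) ∂μ) ^ (1 / (2 : ℝ)) * (∫ a, |g a| ^ (2 : ℝ) ∂μ) ^ (1 / (2 : ℝ)) :=
        integral_mul_le_Lp_mul_Lq_of_nonneg Real.HolderConjugate.two_two
          (ae_of_all _ fun _ => abs_nonneg _) (ae_of_all _ fun _ => abs_nonneg _)
          (by rw [ENNReal.ofReal_ofNat]; exact hf.abs) (by rw [ENNReal.ofReal_ofNat]; exact hg.abs)
    _ = _ := by rw [hrpow, hrpow, ← Real.sqrt_eq_rpow, ← Real.sqrt_eq_rpow]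

section Weighted

variable {k : ℕ} {r : ℝ} {v : ℝ → ℝ}

theorem memLp_sqrt_pow_mul_of_integrableOn_Ioi (hr : 0 ≤ r)
    (hv : AEStronglyMeasurable v (volume.restrict (Ioi r)))
    (hv2 : IntegrableOn (fun s => s ^ k * v s ^ 2) (Ioi r)) :
    MemLp (fun s => √(s ^ k) * v s) 2 (volume.restrict (Ioi r)) := by
  refine (memLp_two_iff_integrable_sq (by fun_prop)).2 ?_
  refine (integrableOn_congr_fun (fun s (hs : r < s) => ?_) measurableSet_Ioi).1 hv2
  rw [mul_pow, Real.sq_sqrt (by have := hr.trans hs.le; positivity)]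

theorem setIntegral_sqrt_pow_mul_mul (hr : 0 ≤ r) (w : ℝ → ℝ) :
    ∫ s in Ioi r, √(s ^ k) * v s * (√(s ^ k) * w s) = ∫ s in Ioi r, s ^ k * (v s * w s) := by
  refine setIntegral_congr_fun measurableSet_Ioi fun s (hs : r < s) => ?_
  have := Real.mul_self_sqrt (pow_nonneg (hr.trans hs.le) k)
  linear_combination v s * w s * this

theorem natCast_mul_pow_sub_one_le {s : ℝ} (hr : 0 < r) (hrs : r ≤ s) :
    (k : ℝ) * s ^ (k - 1) ≤ k / r * s ^ k := by
  rw [div_mul_eq_mul_div, le_div_iff₀ hr]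
  rcases k with _ | k
  · simp
  · have hs : 0 ≤ s := hr.le.trans hrs
    rw [Nat.add_sub_cancel, pow_succ, ← mul_assoc]
    gcongr

theorem integrableOn_Ioi_natCast_mul_pow_sub_one_mul (hr : 0 < r) (hv : ContinuousOn v (Ioi r))
    (hv2 : IntegrableOn (fun s => s ^ k * v s ^ 2) (Ioi r)) :
    IntegrableOn (fun s => k * s ^ (k - 1) * v s ^ 2) (Ioi r) := by
  refine (hv2.const_mul (k / r)).mono'
    ((ContinuousOn.mul (by fun_prop) (hv.pow 2)).aestronglyMeasurable measurableSet_Ioi) ?_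
  refine (ae_restrict_mem measurableSet_Ioi).mono fun s (hs : r < s) => ?_
  rw [Real.norm_of_nonneg (by have := hr.trans hs; positivity), ← mul_assoc]
  exact mul_le_mul_of_nonneg_right (natCast_mul_pow_sub_one_le hr hs.le) (sq_nonneg _)

end Weighted

theorem pow_mul_sq_le_of_integrableOn_Ioi {u : ℝ → ℝ} {k : ℕ} {r : ℝ} (hr : 0 < r)
    (hu : ∀ s ∈ Ici r, DifferentiableAt ℝ u s)
    (hu2 : IntegrableOn (fun s => s ^ k * u s ^ 2) (Ioi r))
    (hu'2 : IntegrableOn (fun s => s ^ k * deriv u s ^ 2) (Ioi r)) :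
    r ^ k * u r ^ 2 ≤
      2 * (√(∫ s in Ioi r, s ^ k * u s ^ 2) * √(∫ s in Ioi r, s ^ k * deriv u s ^ 2)) := by
  have hcont : ContinuousOn u (Ici r) := fun s hs => (hu s hs).continuousAt.continuousWithinAt
  have hLu := memLp_sqrt_pow_mul_of_integrableOn_Ioi hr.le
    ((hcont.mono Ioi_subset_Ici_self).aestronglyMeasurable measurableSet_Ioi) hu2
  have hLu' := memLp_sqrt_pow_mul_of_integrableOn_Ioi hr.le
    (measurable_deriv u).aestronglyMeasurable hu'2
  have hcross : IntegrableOn (fun s => s ^ k * (u s * deriv u s)) (Ioi r) := by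
    refine (integrableOn_congr_fun (fun s (hs : r < s) => ?_) measurableSet_Ioi).1
      (hLu.integrable_mul hLu')
    have := Real.mul_self_sqrt (pow_nonneg (hr.le.trans hs.le) k)
    simp only [Pi.mul_apply]
    linear_combination u s * deriv u s * this
  have hlower := integrableOn_Ioi_natCast_mul_pow_sub_one_mul hr
    (hcont.mono Ioi_subset_Ici_self) hu2
  have hderiv : ∀ s ∈ Ici r, HasDerivAt (fun t => t ^ k * u t ^ 2)
      (k * s ^ (k - 1) * u s ^ 2 + 2 * (s ^ k * (u s * deriv u s))) s := fun s hs => by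
    refine ((hasDerivAt_pow k s).mul ((hu s hs).hasDerivAt.pow 2)).congr_deriv ?_
    simp only [Pi.pow_apply]
    push_cast
    ring
  have hderiv_int := hlower.add (hcross.const_mul 2)
  have hFTC := integral_Ioi_of_hasDerivAt_of_tendsto' hderiv hderiv_int
    (tendsto_zero_of_hasDerivAt_of_integrableOn_Ioi (fun s hs => hderiv s (mem_Ici_of_Ioi hs))
      hderiv_int hu2)
  rw [integral_add hlower (hcross.const_mul 2), integral_const_mul] at hFTC
  have hlower_nonneg : 0 ≤ ∫ s in Ioi r, k * s ^ (k - 1) * u s ^ 2 :=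
    setIntegral_nonneg measurableSet_Ioi fun s (hs : r < s) => by
      have := hr.trans hs; positivity
  have hCS := abs_integral_mul_le_sqrt_mul_sqrt hLu hLu'
  simp_rw [sq] at hCS ⊢
  rw [setIntegral_sqrt_pow_mul_mul hr.le, setIntegral_sqrt_pow_mul_mul hr.le,
    setIntegral_sqrt_pow_mul_mul hr.le] at hCS
  linarith [neg_abs_le (∫ s in Ioi r, s ^ k * (u s * deriv u s))]

theorem abs_le_of_pow_mul_sq_le {r v a b A B c : ℝ} {k : ℕ} (hr : 0 < r) (hc : 0 < c)
    (ha : 0 ≤ a) (hb : 0 ≤ b) (hA : c * a ≤ A) (hB : c * b ≤ B)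
    (h : r ^ k * v ^ 2 ≤ 2 * (√a * √b)) :
    |v| ≤ √(2 / c) * r ^ (-((k : ℝ) / 2)) * A ^ (1 / 4 : ℝ) * B ^ (1 / 4 : ℝ) := by
  have hA0 : 0 ≤ A := (mul_nonneg hc.le ha).trans hA
  have hB0 : 0 ≤ B := (mul_nonneg hc.le hb).trans hB
  have hscaled : c * (r ^ k * v ^ 2) ≤ 2 * (√A * √B) := calc
    c * (r ^ k * v ^ 2) ≤ c * (2 * (√a * √b)) := by gcongr
    _ = 2 * (√(c * a) * √(c * b)) := by
      rw [Real.sqrt_mul hc.le, Real.sqrt_mul hc.le]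
      linear_combination (-(2 * √a * √b)) * Real.mul_self_sqrt hc.le
    _ ≤ 2 * (√A * √B) := by gcongr
  have hquarter : ∀ t : ℝ, 0 ≤ t → (t ^ (1 / 4 : ℝ)) ^ 2 = √t := fun t ht => by
    rw [← Real.rpow_natCast, ← Real.rpow_mul ht, Real.sqrt_eq_rpow]; norm_num
  have hhalf : (r ^ (-((k : ℝ) / 2))) ^ 2 = (r ^ k)⁻¹ := by
    rw [← Real.rpow_natCast, ← Real.rpow_mul hr.le, ← Real.rpow_natCast, ← Real.rpow_neg hr.le]
    norm_num
  refine abs_le_of_sq_le_sq ?_ (by positivity)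
  rw [mul_pow, mul_pow, mul_pow, Real.sq_sqrt (by positivity), hhalf, hquarter A hA0,
    hquarter B hB0, show 2 / c * (r ^ k)⁻¹ * √A * √B = 2 * (√A * √B) / (c * r ^ k) by
      field_simp, le_div_iff₀ (by positivity)]
  linarith

section Radial

variable {E : Type*} [NormedAddCommGroup E] [NormedSpace ℝ E] {f : E → ℝ} {g : ℝ → ℝ}

theorem exists_norm_eq_one_and_norm_smul_eq {e : E} (he : ‖e‖ = 1) (x : E) :
    ∃ w : E, ‖w‖ = 1 ∧ ‖x‖ • w = x := by
  rcases eq_or_ne x 0 with rfl | hx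
  · exact ⟨e, he, by simp⟩
  · exact ⟨‖x‖⁻¹ • x, norm_smul_inv_norm hx, smul_inv_smul₀ (norm_ne_zero_iff.2 hx) x⟩

theorem comp_smul_eq_of_radial (hf : ∀ x, f x = g ‖x‖) {v w : E} (hv : ‖v‖ = 1)
    (hw : ‖w‖ = 1) : (fun t : ℝ => f (t • v)) = fun t => f (t • w) := by
  ext t
  rw [hf, hf, norm_smul, norm_smul, hv, hw]

theorem eq_norm_smul_of_radial (hf : ∀ x, f x = g ‖x‖) {e : E} (he : ‖e‖ = 1) (x : E) :
    f x = f (‖x‖ • e) := by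
  rw [hf, hf, norm_smul, norm_norm, he, mul_one]

theorem abs_deriv_comp_smul_norm_le (hf : ∀ x, f x = g ‖x‖) {e : E} (he : ‖e‖ = 1) {x : E}
    (hfx : DifferentiableAt ℝ f x) : |deriv (fun t : ℝ => f (t • e)) ‖x‖| ≤ ‖fderiv ℝ f x‖ := by
  obtain ⟨w, hw, hxw⟩ := exists_norm_eq_one_and_norm_smul_eq he x
  have hline : HasDerivAt (fun t : ℝ => f (t • w)) (fderiv ℝ f x w) ‖x‖ := by
    rw [← hxw] at hfx
    simpa [hxw, Function.comp_def] using
      hfx.hasFDerivAt.comp_hasDerivAt _ ((hasDerivAt_id (‖x‖ : ℝ)).smul_const w)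
  rw [comp_smul_eq_of_radial hf he hw, hline.deriv]
  simpa [hw] using (fderiv ℝ f x).le_opNorm w

end Radial

section Polar

variable {E : Type*} [NormedAddCommGroup E] [NormedSpace ℝ E] [MeasurableSpace E]
  [FiniteDimensional ℝ E] [Nontrivial E] (μ : Measure E) [μ.IsAddHaarMeasure]

theorem finrank_mul_measureReal_unitBall_pos : 0 < dim E * μ.real (ball 0 1) := by
  have : (0 : ℝ) < dim E := Nat.cast_pos.2 Module.finrank_pos
  have : 0 < μ.real (ball 0 1) :=
    ENNReal.toReal_pos (measure_ball_pos μ 0 one_pos).ne' measure_ball_lt_top.ne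
  positivity

variable [BorelSpace E] {h : ℝ → ℝ} {r : ℝ}

theorem integrableOn_Ioi_pow_mul_of_integrable_comp_norm (hh : Integrable (fun x => h ‖x‖) μ)
    (hr : 0 ≤ r) : IntegrableOn (fun s => s ^ (dim E - 1) * h s) (Ioi r) :=
  ((integrable_fun_norm_addHaar μ).1 hh).mono_set (Ioi_subset_Ioi hr)

theorem mul_setIntegral_Ioi_pow_mul_le_integral_comp_norm (hh : Integrable (fun x => h ‖x‖) μ)
    (h0 : ∀ s, 0 ≤ h s) (hr : 0 ≤ r) :
    dim E * μ.real (ball 0 1) * ∫ s in Ioi r, s ^ (dim E - 1) * h s ≤ ∫ x, h ‖x‖ ∂μ := by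
  rw [integral_fun_norm_addHaar μ h, nsmul_eq_mul, smul_eq_mul, mul_assoc]
  gcongr
  refine setIntegral_mono_set (integrableOn_Ioi_pow_mul_of_integrable_comp_norm μ hh le_rfl) ?_
    (Ioi_subset_Ioi hr).eventuallyLE
  exact (ae_restrict_mem measurableSet_Ioi).mono fun s (hs : 0 < s) => by
    have := h0 s; positivity

end Polar

theorem abs_le_of_radial {E : Type*} [NormedAddCommGroup E] [NormedSpace ℝ E]
    [MeasurableSpace E] [BorelSpace E] [FiniteDimensional ℝ E] [Nontrivial E]
    (μ : Measure E) [μ.IsAddHaarMeasure] {f : E → ℝ} {g : ℝ → ℝ} (hf : Differentiable ℝ f)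
    (hrad : ∀ x, f x = g ‖x‖) (hf2 : Integrable (fun x => f x ^ 2) μ)
    (hdf2 : Integrable (fun x => ‖fderiv ℝ f x‖ ^ 2) μ) {x : E} (hx : x ≠ 0) :
    |f x| ≤ √(2 / (dim E * μ.real (ball 0 1))) * ‖x‖ ^ (-(((dim E : ℝ) - 1) / 2)) *
      (∫ y, f y ^ 2 ∂μ) ^ (1 / 4 : ℝ) * (∫ y, ‖fderiv ℝ f y‖ ^ 2 ∂μ) ^ (1 / 4 : ℝ) := by
  obtain ⟨e, he⟩ := exists_norm_eq E zero_le_one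
  set u : ℝ → ℝ := fun t => f (t • e)
  have hu : Differentiable ℝ u := hf.comp (differentiable_id.smul_const e)
  have hfu : ∀ y, f y = u ‖y‖ := eq_norm_smul_of_radial hrad he
  have hu'_le : ∀ y, deriv u ‖y‖ ^ 2 ≤ ‖fderiv ℝ f y‖ ^ 2 := fun y => by
    rw [← sq_abs]
    exact pow_le_pow_left₀ (abs_nonneg _) (abs_deriv_comp_smul_norm_le hrad he (hf y)) 2
  have hu2 : Integrable (fun y => u ‖y‖ ^ 2) μ := by simpa only [hfu] using hf2
  have hu'2 : Integrable (fun y => deriv u ‖y‖ ^ 2) μ :=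
    hdf2.mono' (((measurable_deriv u).comp measurable_norm).pow_const 2).aestronglyMeasurable
      (ae_of_all _ fun y => (Real.norm_of_nonneg (sq_nonneg _)).trans_le (hu'_le y))
  have hx0 : 0 < ‖x‖ := norm_pos_iff.2 hx
  have hA := mul_setIntegral_Ioi_pow_mul_le_integral_comp_norm μ hu2 (fun _ => sq_nonneg _) hx0.le
  have hB := mul_setIntegral_Ioi_pow_mul_le_integral_comp_norm μ hu'2 (fun _ => sq_nonneg _)
    hx0.le
  simp only [← hfu] at hA
  have hB' := hB.trans (integral_mono hu'2 hdf2 hu'_le)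
  have h1D := pow_mul_sq_le_of_integrableOn_Ioi hx0 (fun s _ => hu s)
    (integrableOn_Ioi_pow_mul_of_integrable_comp_norm μ hu2 hx0.le)
    (integrableOn_Ioi_pow_mul_of_integrable_comp_norm μ hu'2 hx0.le)
  have hdim : ((dim E - 1 : ℕ) : ℝ) = (dim E : ℝ) - 1 := by
    rw [Nat.cast_sub Module.finrank_pos, Nat.cast_one]
  rw [hfu x, ← hdim]
  exact abs_le_of_pow_mul_sq_le hx0 (finrank_mul_measureReal_unitBall_pos μ)
    (setIntegral_nonneg measurableSet_Ioi fun s (hs : ‖x‖ < s) => by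
      have := hx0.trans hs; positivity)
    (setIntegral_nonneg measurableSet_Ioi fun s (hs : ‖x‖ < s) => by
      have := hx0.trans hs; positivity) hA hB' h1D

theorem stmt4 (N : ℕ) (hN : 3 ≤ N) :
    ∃ C > 0, ∀ f : EuclideanSpace ℝ (Fin N) → ℝ,
      Continuous f → Differentiable ℝ f →
      (∃ g : ℝ → ℝ, ∀ x, f x = g ‖x‖) →
      Integrable (fun x => f x ^ 2) →
      Integrable (fun x => ‖fderiv ℝ f x‖ ^ 2) →
      ∀ x : EuclideanSpace ℝ (Fin N), 1 ≤ ‖x‖ →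
        |f x| ≤ C * ‖x‖ ^ (-(((N:ℝ) - 1)/2)) *
          (∫ y, f y ^ 2) ^ ((1:ℝ)/4) * (∫ y, ‖fderiv ℝ f y‖ ^ 2) ^ ((1:ℝ)/4) := by
  have : Nontrivial (EuclideanSpace ℝ (Fin N)) := by
    have : Nonempty (Fin N) := ⟨⟨0, by omega⟩⟩
    infer_instance
  refine ⟨√(2 / (dim (EuclideanSpace ℝ (Fin N)) * volume.real (ball 0 1))),
    Real.sqrt_pos.2 (div_pos two_pos (finrank_mul_measureReal_unitBall_pos volume)), ?_⟩
  rintro f - hf ⟨g, hrad⟩ hf2 hdf2 x hx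
  simpa only [finrank_euclideanSpace_fin] using
    abs_le_of_radial volume hf hrad hf2 hdf2 (norm_pos_iff.1 (one_pos.trans_le hx))
end

section
/- Let N ∈ {3,4}, W the Aubin–Talenti function on ℝ^N, p_c = (N+2)/(N−2), and χ a smooth radial cutoff with χ = 1 on {|x| ≤ 1} and χ = 0 on {|x| ≥ 2}. Set W_a(x) = χ(x/a) W(x). Then there exists a > 0 such that ∫ (ΔW_a + p_c W^{p_c−1} W_a) W_a dx > 0. -/
open MeasureTheory Real

/-- The Aubin–Talenti function `W`. -/
noncomputable def W (N : ℕ) (x : EuclideanSpace ℝ (Fin N)) : ℝ :=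
  (1 + ‖x‖ ^ 2 / (N * ((N:ℝ) - 2))) ^ (-(((N:ℝ) - 2)/2))

/-- The Laplacian, written as the trace of the second derivative. -/
noncomputable def lap (N : ℕ) (f : EuclideanSpace ℝ (Fin N) → ℝ)
    (x : EuclideanSpace ℝ (Fin N)) : ℝ :=
  ∑ i : Fin N, fderiv ℝ (fun y => fderiv ℝ f y (EuclideanSpace.single i 1)) x
    (EuclideanSpace.single i 1)

namespace AT

noncomputable def g0 (c s t : ℝ) : ℝ := (1 + t/c) ^ (-s)
noncomputable def g1 (c s t : ℝ) : ℝ := (-s/c) * (1 + t/c) ^ (-s-1)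
noncomputable def g2 (c s t : ℝ) : ℝ := (s*(s+1)/c^2) * (1 + t/c) ^ (-s-2)

lemma upos {c t : ℝ} (hc : 0 < c) (ht : 0 ≤ t) : 0 < 1 + t/c := by positivity

lemma hasDerivAt_g0 {c s t : ℝ} (hc : 0 < c) (ht : 0 ≤ t) :
    HasDerivAt (g0 c s) (g1 c s t) t := by
  have h1 : HasDerivAt (fun t : ℝ => 1 + t/c) (1/c) t :=
    ((hasDerivAt_id t).div_const c).const_add 1
  have := h1.rpow_const (p := -s) (Or.inl (ne_of_gt (upos hc ht)))
  refine this.congr_deriv ?_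
  unfold g1; ring

lemma hasDerivAt_g1 {c s t : ℝ} (hc : 0 < c) (ht : 0 ≤ t) :
    HasDerivAt (g1 c s) (g2 c s t) t := by
  have h1 : HasDerivAt (fun t : ℝ => 1 + t/c) (1/c) t :=
    ((hasDerivAt_id t).div_const c).const_add 1
  have := (h1.rpow_const (p := -s-1) (Or.inl (ne_of_gt (upos hc ht)))).const_mul (-s/c)
  refine this.congr_deriv ?_
  unfold g2
  have : -s-1-1 = -s-2 := by ring
  rw [this]; ring

end AT

namespace AT
variable {N : ℕ}

local notation "E" => EuclideanSpace ℝ (Fin N)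
noncomputable def cc (N : ℕ) : ℝ := (N:ℝ) * ((N:ℝ) - 2)
noncomputable def ss (N : ℕ) : ℝ := ((N:ℝ) - 2)/2

lemma W_eq (x : E) : W N x = g0 (cc N) (ss N) (‖x‖^2) := rfl

lemma hasFDerivAt_W (hc : 0 < cc N) (x : E) :
    HasFDerivAt (W N) ((g1 (cc N) (ss N) (‖x‖^2)) • (2 • (innerSL ℝ x))) x := by
  have hq : HasFDerivAt (fun y : E => ‖y‖^2) (2 • (innerSL ℝ x)) x :=
    (hasStrictFDerivAt_norm_sq x).hasFDerivAt
  exact (hasDerivAt_g0 hc (by positivity)).comp_hasFDerivAt x hq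

lemma fderiv_W_apply (hc : 0 < cc N) (x : E) (i : Fin N) :
    fderiv ℝ (W N) x (EuclideanSpace.single i 1) =
      g1 (cc N) (ss N) (‖x‖^2) * (2 * x i) := by
  rw [(hasFDerivAt_W hc x).fderiv]
  simp [EuclideanSpace.inner_single_right, real_inner_comm]

end AT

namespace AT
variable {N : ℕ}
local notation "E" => EuclideanSpace ℝ (Fin N)

lemma hasFDerivAt_D1W (hc : 0 < cc N) (x : E) (i : Fin N) :
    HasFDerivAt (fun y : E => fderiv ℝ (W N) y (EuclideanSpace.single i 1))
      ((g1 (cc N) (ss N) (‖x‖^2)) • ((2:ℝ) • (EuclideanSpace.proj i : E →L[ℝ] ℝ))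
        + (2 * x i) • ((g2 (cc N) (ss N) (‖x‖^2)) • (2 • (innerSL ℝ x)))) x := by
  have heq : (fun y : E => fderiv ℝ (W N) y (EuclideanSpace.single i 1)) =
      fun y : E => g1 (cc N) (ss N) (‖y‖^2) * (2 * y i) := by
    funext y; exact fderiv_W_apply hc y i
  rw [heq]
  have h1 : HasFDerivAt (fun y : E => g1 (cc N) (ss N) (‖y‖^2))
      ((g2 (cc N) (ss N) (‖x‖^2)) • (2 • (innerSL ℝ x))) x :=
    (hasDerivAt_g1 hc (by positivity)).comp_hasFDerivAt x
      (hasStrictFDerivAt_norm_sq x).hasFDerivAt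
  have h2 : HasFDerivAt (fun y : E => 2 * y i)
      ((2:ℝ) • (EuclideanSpace.proj i : E →L[ℝ] ℝ)) x :=
    ((EuclideanSpace.proj i : E →L[ℝ] ℝ).hasFDerivAt).const_mul 2
  exact h1.mul h2

lemma D2W (hc : 0 < cc N) (x : E) (i : Fin N) :
    fderiv ℝ (fun y => fderiv ℝ (W N) y (EuclideanSpace.single i 1)) x
      (EuclideanSpace.single i 1)
    = g2 (cc N) (ss N) (‖x‖^2) * (2 * x i)^2 + g1 (cc N) (ss N) (‖x‖^2) * 2 := by
  rw [(hasFDerivAt_D1W hc x i).fderiv]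
  simp [EuclideanSpace.inner_single_right, EuclideanSpace.single_apply]
  ring

end AT

namespace AT
variable {N : ℕ}
local notation "E" => EuclideanSpace ℝ (Fin N)

lemma sum_sq (x : E) : ∑ i, x i ^ 2 = ‖x‖^2 := by
  rw [EuclideanSpace.norm_eq, Real.sq_sqrt (by positivity)]
  simp [sq_abs]

lemma lap_W (hc : 0 < cc N) (x : E) :
    lap N (W N) x = 4 * ‖x‖^2 * g2 (cc N) (ss N) (‖x‖^2)
      + 2 * N * g1 (cc N) (ss N) (‖x‖^2) := by
  unfold lap
  have : ∀ i : Fin N, fderiv ℝ (fun y => fderiv ℝ (W N) y (EuclideanSpace.single i 1)) x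
      (EuclideanSpace.single i 1)
      = g2 (cc N) (ss N) (‖x‖^2) * (2 * x i)^2 + g1 (cc N) (ss N) (‖x‖^2) * 2 :=
    D2W hc x
  rw [Finset.sum_congr rfl fun i _ => this i]
  rw [Finset.sum_add_distrib, Finset.sum_const]
  have h4 : ∑ i : Fin N, g2 (cc N) (ss N) (‖x‖^2) * (2 * x i)^2
      = 4 * g2 (cc N) (ss N) (‖x‖^2) * ∑ i, x i ^ 2 := by
    rw [Finset.mul_sum]
    apply Finset.sum_congr rfl
    intro i _; ring
  rw [h4, sum_sq]
  simp [Finset.card_univ]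
  ring

lemma lap_W_eq (hN : N = 3 ∨ N = 4) (x : E) :
    lap N (W N) x = -(W N x ^ ((((N:ℝ)+2)/((N:ℝ) - 2)))) := by
  have hn : (2:ℝ) < (N:ℝ) := by rcases hN with h | h <;> (rw [h]; norm_num)
  have hc : 0 < cc N := by unfold cc; nlinarith
  rw [lap_W hc x, W_eq]
  set q := ‖x‖^2 with hq
  have hq0 : 0 ≤ q := by positivity
  set n := (N:ℝ)
  have hu : 0 < 1 + q / cc N := upos hc hq0
  have hn2 : n - 2 ≠ 0 := by intro h; nlinarith
  have hrw : (g0 (cc N) (ss N) q) ^ ((n+2)/(n-2)) = (1 + q / cc N) ^ (-(ss N)-2) := by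
    unfold g0
    rw [← Real.rpow_mul hu.le]
    congr 1
    unfold ss
    field_simp
    ring
  rw [hrw]
  unfold g1 g2
  have h1 : (-(ss N) - 1) = (-(ss N) - 2) + 1 := by ring
  rw [h1, Real.rpow_add hu, Real.rpow_one]
  have hne : n ≠ 0 := by nlinarith
  have hu0 : 1 + q / cc N ≠ 0 := ne_of_gt hu
  have hs : ss N = (n-2)/2 := rfl
  have hcn : cc N = n * (n - 2) := rfl
  rw [hs, hcn] at *
  field_simp
  ring

end AT

namespace AT
variable {N : ℕ}
local notation "E" => EuclideanSpace ℝ (Fin N)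

noncomputable def P1 (N : ℕ) (χ : EuclideanSpace ℝ (Fin N) → ℝ) (i : Fin N)
    (z : EuclideanSpace ℝ (Fin N)) : ℝ := fderiv ℝ χ z (EuclideanSpace.single i 1)

noncomputable def P2 (N : ℕ) (χ : EuclideanSpace ℝ (Fin N) → ℝ) (i : Fin N)
    (z : EuclideanSpace ℝ (Fin N)) : ℝ :=
  fderiv ℝ (P1 N χ i) z (EuclideanSpace.single i 1)

variable {χ : EuclideanSpace ℝ (Fin N) → ℝ}

lemma P1_contDiff (hχ : ContDiff ℝ (⊤ : ℕ∞) χ) (i : Fin N) : ContDiff ℝ (⊤ : ℕ∞) (P1 N χ i) :=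
  (hχ.fderiv_right (by simp)).clm_apply contDiff_const

lemma P2_contDiff (hχ : ContDiff ℝ (⊤ : ℕ∞) χ) (i : Fin N) : ContDiff ℝ (⊤ : ℕ∞) (P2 N χ i) :=
  ((P1_contDiff hχ i).fderiv_right (by simp)).clm_apply contDiff_const

lemma hasFDerivAt_smulmap (a : ℝ) (x : E) :
    HasFDerivAt (fun y : E => a⁻¹ • y) (a⁻¹ • ContinuousLinearMap.id ℝ (EuclideanSpace ℝ (Fin N))) x :=
  (ContinuousLinearMap.id ℝ (EuclideanSpace ℝ (Fin N))).hasFDerivAt.const_smul a⁻¹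

lemma D1_scaled {f : EuclideanSpace ℝ (Fin N) → ℝ} (hf : Differentiable ℝ f) (a : ℝ) (x v : E) :
    fderiv ℝ (fun y : E => f (a⁻¹ • y)) x v = a⁻¹ * fderiv ℝ f (a⁻¹ • x) v := by
  have h := ((hf (a⁻¹ • x)).hasFDerivAt.comp x (hasFDerivAt_smulmap a x)).fderiv
  rw [show (fun y : E => f (a⁻¹ • y)) = f ∘ (fun y : E => a⁻¹ • y) from rfl, h]
  simp [_root_.map_smul, smul_eq_mul]

lemma D1_chia (hχ : ContDiff ℝ (⊤ : ℕ∞) χ) (a : ℝ) (x : E) (i : Fin N) :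
    fderiv ℝ (fun y : E => χ (a⁻¹ • y)) x (EuclideanSpace.single i 1)
      = a⁻¹ * P1 N χ i (a⁻¹ • x) :=
  D1_scaled (hχ.differentiable (by simp)) a x _

lemma D2_chia (hχ : ContDiff ℝ (⊤ : ℕ∞) χ) (a : ℝ) (x : E) (i : Fin N) :
    fderiv ℝ (fun y : E => fderiv ℝ (fun z : E => χ (a⁻¹ • z)) y (EuclideanSpace.single i 1))
      x (EuclideanSpace.single i 1) = a⁻¹^2 * P2 N χ i (a⁻¹ • x) := by
  have heq : (fun y : E => fderiv ℝ (fun z : E => χ (a⁻¹ • z)) y (EuclideanSpace.single i 1))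
      = fun y : E => a⁻¹ * P1 N χ i (a⁻¹ • y) := by
    funext y; exact D1_chia hχ a y i
  have hd : DifferentiableAt ℝ (fun y : E => P1 N χ i (a⁻¹ • y)) x :=
    (((P1_contDiff hχ i).differentiable (by simp)) (a⁻¹ • x)).comp x
      (hasFDerivAt_smulmap a x).differentiableAt
  rw [heq, fderiv_const_mul hd]
  rw [ContinuousLinearMap.smul_apply, D1_scaled ((P1_contDiff hχ i).differentiable (by simp)) a x]
  unfold P2
  simp [smul_eq_mul]
  ring

noncomputable def SS (N : ℕ) (χ : EuclideanSpace ℝ (Fin N) → ℝ) (a : ℝ)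
    (x : EuclideanSpace ℝ (Fin N)) : ℝ :=
  ∑ i, (a⁻¹ * P1 N χ i (a⁻¹ • x)) * (g1 (cc N) (ss N) (‖x‖^2) * (2 * x i))

noncomputable def LL (N : ℕ) (χ : EuclideanSpace ℝ (Fin N) → ℝ) (a : ℝ)
    (x : EuclideanSpace ℝ (Fin N)) : ℝ :=
  a⁻¹^2 * ∑ i, P2 N χ i (a⁻¹ • x)

lemma chia_differentiable (hχ : ContDiff ℝ (⊤ : ℕ∞) χ) (a : ℝ) :
    Differentiable ℝ (fun y : E => χ (a⁻¹ • y)) := fun y =>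
  ((hχ.differentiable (by simp)) (a⁻¹ • y)).comp y (hasFDerivAt_smulmap a y).differentiableAt

lemma lap_F (hc : 0 < cc N) (hχ : ContDiff ℝ (⊤ : ℕ∞) χ) (a : ℝ) (x : E) :
    lap N (fun y => χ (a⁻¹ • y) * W N y) x
      = χ (a⁻¹ • x) * lap N (W N) x + 2 * SS N χ a x + W N x * LL N χ a x := by
  have hWd : ∀ y : E, DifferentiableAt ℝ (W N) y := fun y =>
    (hasFDerivAt_W hc y).differentiableAt
  have hχad := chia_differentiable hχ a
  unfold lap
  have key : ∀ i : Fin N,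
      fderiv ℝ (fun y => fderiv ℝ (fun z => χ (a⁻¹ • z) * W N z) y (EuclideanSpace.single i 1)) x
        (EuclideanSpace.single i 1)
      = χ (a⁻¹ • x) * (fderiv ℝ (fun y => fderiv ℝ (W N) y (EuclideanSpace.single i 1)) x
            (EuclideanSpace.single i 1))
        + 2 * ((a⁻¹ * P1 N χ i (a⁻¹ • x)) * (g1 (cc N) (ss N) (‖x‖^2) * (2 * x i)))
        + W N x * (a⁻¹^2 * P2 N χ i (a⁻¹ • x)) := by
    intro i
    have step1 : (fun y => fderiv ℝ (fun z => χ (a⁻¹ • z) * W N z) y (EuclideanSpace.single i 1))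
        = fun y => χ (a⁻¹ • y) * fderiv ℝ (W N) y (EuclideanSpace.single i 1)
          + W N y * fderiv ℝ (fun z : E => χ (a⁻¹ • z)) y (EuclideanSpace.single i 1) := by
      funext y
      rw [fderiv_fun_mul (hχad y) (hWd y)]
      simp [smul_eq_mul]
    rw [step1]
    have hA : DifferentiableAt ℝ (fun y : E => fderiv ℝ (W N) y (EuclideanSpace.single i 1)) x :=
      (hasFDerivAt_D1W hc x i).differentiableAt
    have heqχ : (fun y : E => fderiv ℝ (fun z : E => χ (a⁻¹ • z)) y (EuclideanSpace.single i 1))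
        = fun y : E => a⁻¹ * P1 N χ i (a⁻¹ • y) := by
      funext y; exact D1_chia hχ a y i
    have hB : DifferentiableAt ℝ
        (fun y : E => fderiv ℝ (fun z : E => χ (a⁻¹ • z)) y (EuclideanSpace.single i 1)) x := by
      rw [heqχ]
      exact ((((P1_contDiff hχ i).differentiable (by simp)) (a⁻¹ • x)).comp x
        (hasFDerivAt_smulmap a x).differentiableAt).const_mul a⁻¹
    have h1 : DifferentiableAt ℝ (fun y : E => χ (a⁻¹ • y) *
        fderiv ℝ (W N) y (EuclideanSpace.single i 1)) x := (hχad x).mul hA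
    have h2 : DifferentiableAt ℝ (fun y : E => W N y *
        fderiv ℝ (fun z : E => χ (a⁻¹ • z)) y (EuclideanSpace.single i 1)) x := (hWd x).mul hB
    rw [fderiv_fun_add h1 h2, ContinuousLinearMap.add_apply,
      fderiv_fun_mul (hχad x) hA, fderiv_fun_mul (hWd x) hB]
    simp only [ContinuousLinearMap.add_apply, ContinuousLinearMap.smul_apply, smul_eq_mul]
    rw [D1_chia hχ a x i, D2_chia hχ a x i, fderiv_W_apply hc x i]
    ring
  rw [Finset.sum_congr rfl fun i _ => key i]
  rw [Finset.sum_add_distrib, Finset.sum_add_distrib, ← Finset.mul_sum, ← Finset.mul_sum,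
    ← Finset.mul_sum, ← Finset.mul_sum]
  unfold SS LL
  ring

lemma W_pos (hc : 0 < cc N) (x : E) : 0 < W N x := by
  have : W N x = g0 (cc N) (ss N) (‖x‖^2) := rfl
  rw [this]; unfold g0
  exact Real.rpow_pos_of_pos (upos hc (by positivity)) _

lemma integrand_eq (hN : N = 3 ∨ N = 4) (hχ : ContDiff ℝ (⊤ : ℕ∞) χ) (a : ℝ) (x : E) :
    (lap N (fun y => χ (a⁻¹ • y) * W N y) x
        + (((N:ℝ)+2)/((N:ℝ) - 2)) * W N x ^ ((((N:ℝ)+2)/((N:ℝ) - 2)) - 1)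
          * (χ (a⁻¹ • x) * W N x)) * (χ (a⁻¹ • x) * W N x)
      = ((((N:ℝ)+2)/((N:ℝ) - 2)) - 1) * χ (a⁻¹ • x)^2
          * (W N x ^ (((N:ℝ)+2)/((N:ℝ) - 2)) * W N x)
        + (2 * SS N χ a x + W N x * LL N χ a x) * (χ (a⁻¹ • x) * W N x) := by
  have hn : (2:ℝ) < (N:ℝ) := by rcases hN with h | h <;> (rw [h]; norm_num)
  have hc : 0 < cc N := by unfold cc; nlinarith
  have hW0 : 0 < W N x := W_pos hc x
  rw [lap_F hc hχ a x, lap_W_eq hN x]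
  have h : W N x ^ ((((N:ℝ)+2)/((N:ℝ) - 2)) - 1) * W N x
      = W N x ^ (((N:ℝ)+2)/((N:ℝ) - 2)) := by
    rw [Real.rpow_sub hW0, Real.rpow_one, div_mul_cancel₀]
    exact ne_of_gt hW0
  linear_combination ((((N:ℝ)+2)/((N:ℝ) - 2)) * χ (a⁻¹ • x)^2 * W N x) * h

lemma zero_on_closedBall {f : E → ℝ} (hf : Continuous f)
    (h : ∀ z : E, ‖z‖ < 1 → f z = 0) : ∀ z : E, ‖z‖ ≤ 1 → f z = 0 := by
  intro z hz
  have hsub : Metric.closedBall (0:E) 1 ⊆ f ⁻¹' {0} := by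
    rw [← closure_ball (0:E) (one_ne_zero)]
    exact closure_minimal (fun y hy => h y (mem_ball_zero_iff.1 hy))
      (isClosed_singleton.preimage hf)
  exact hsub (mem_closedBall_zero_iff.2 hz)

lemma exists_bound {f : E → ℝ} (hf : Continuous f)
    (h0 : ∀ z : E, (2:ℝ) < ‖z‖ → f z = 0) : ∃ M, 0 ≤ M ∧ ∀ z : E, |f z| ≤ M := by
  obtain ⟨z₀, hz₀, hmax⟩ := IsCompact.exists_isMaxOn (isCompact_closedBall (0:E) 2)
    ⟨0, by simp⟩ (continuous_abs.comp hf).continuousOn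
  refine ⟨|f z₀|, abs_nonneg _, fun z => ?_⟩
  by_cases hz : ‖z‖ ≤ 2
  · exact hmax (mem_closedBall_zero_iff.2 hz)
  · rw [h0 z (by linarith [not_le.1 hz])]
    simp [abs_nonneg]

lemma P1_cont (hχ : ContDiff ℝ (⊤ : ℕ∞) χ) (i : Fin N) : Continuous (P1 N χ i) :=
  (P1_contDiff hχ i).continuous

lemma P1_zero_inner (hχ : ContDiff ℝ (⊤ : ℕ∞) χ) (hone : ∀ x : E, ‖x‖ ≤ 1 → χ x = 1) (i : Fin N) :
    ∀ z : E, ‖z‖ ≤ 1 → P1 N χ i z = 0 := by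
  have hlt : ∀ z : E, ‖z‖ < 1 → P1 N χ i z = 0 := by
    intro z hz
    have hev : χ =ᶠ[nhds z] fun _ => (1:ℝ) := by
      filter_upwards [Metric.ball_mem_nhds z (by linarith : (0:ℝ) < 1 - ‖z‖)] with y hy
      apply hone
      have := mem_ball_iff_norm.1 hy
      calc ‖y‖ = ‖z + (y - z)‖ := by congr 1; abel
        _ ≤ ‖z‖ + ‖y - z‖ := norm_add_le _ _
        _ ≤ 1 := by linarith
    unfold P1
    rw [hev.fderiv_eq, fderiv_fun_const]
    simp
  exact zero_on_closedBall (P1_cont hχ i) hlt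

lemma P1_zero_outer (hχ : ContDiff ℝ (⊤ : ℕ∞) χ) (hzero : ∀ x : E, 2 ≤ ‖x‖ → χ x = 0) (i : Fin N) :
    ∀ z : E, (2:ℝ) < ‖z‖ → P1 N χ i z = 0 := by
  intro z hz
  have hev : χ =ᶠ[nhds z] fun _ => (0:ℝ) := by
    filter_upwards [Metric.ball_mem_nhds z (by linarith : (0:ℝ) < ‖z‖ - 2)] with y hy
    apply hzero
    have h1 := mem_ball_iff_norm.1 hy
    have h2 : ‖z‖ - ‖y‖ ≤ ‖y - z‖ := by
      have := norm_sub_norm_le z y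
      rwa [norm_sub_rev] at this
    linarith
  unfold P1
  rw [hev.fderiv_eq, fderiv_fun_const]
  simp

lemma P2_zero_inner (hχ : ContDiff ℝ (⊤ : ℕ∞) χ) (hone : ∀ x : E, ‖x‖ ≤ 1 → χ x = 1) (i : Fin N) :
    ∀ z : E, ‖z‖ ≤ 1 → P2 N χ i z = 0 := by
  apply zero_on_closedBall (P2_contDiff hχ i).continuous
  intro z hz
  have hev : P1 N χ i =ᶠ[nhds z] fun _ => (0:ℝ) := by
    filter_upwards [Metric.ball_mem_nhds z (by linarith : (0:ℝ) < 1 - ‖z‖)] with y hy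
    apply P1_zero_inner hχ hone
    have := mem_ball_iff_norm.1 hy
    calc ‖y‖ = ‖z + (y - z)‖ := by congr 1; abel
      _ ≤ ‖z‖ + ‖y - z‖ := norm_add_le _ _
      _ ≤ 1 := by linarith
  unfold P2
  rw [hev.fderiv_eq, fderiv_fun_const]
  simp

lemma P2_zero_outer (hχ : ContDiff ℝ (⊤ : ℕ∞) χ) (hzero : ∀ x : E, 2 ≤ ‖x‖ → χ x = 0) (i : Fin N) :
    ∀ z : E, (2:ℝ) < ‖z‖ → P2 N χ i z = 0 := by
  intro z hz
  have hev : P1 N χ i =ᶠ[nhds z] fun _ => (0:ℝ) := by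
    filter_upwards [Metric.ball_mem_nhds z (by linarith : (0:ℝ) < ‖z‖ - 2)] with y hy
    apply P1_zero_outer hχ hzero
    have h1 := mem_ball_iff_norm.1 hy
    have h2 : ‖z‖ - ‖y‖ ≤ ‖y - z‖ := by
      have := norm_sub_norm_le z y
      rwa [norm_sub_rev] at this
    linarith
  unfold P2
  rw [hev.fderiv_eq, fderiv_fun_const]
  simp

lemma coord_le_norm (x : E) (i : Fin N) : |x i| ≤ ‖x‖ := by
  apply abs_le_of_sq_le_sq _ (norm_nonneg x)
  rw [← sum_sq x]
  exact Finset.single_le_sum (f := fun j => x j ^ 2) (fun j _ => sq_nonneg _) (Finset.mem_univ i)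

lemma rpow_nat_inv {a : ℝ} (ha : 0 < a) {s : ℝ} (m : ℕ) (hm : 2 * s = (m:ℝ)) :
    ((a^2 : ℝ))^(-s) = (a⁻¹)^m := by
  rw [← Real.rpow_natCast a 2, ← Real.rpow_mul ha.le]
  have : (2:ℝ) * (-s) = -(m:ℝ) := by push_cast; linarith
  rw [show ((2:ℕ):ℝ) * (-s) = (2:ℝ) * (-s) by norm_num, this, Real.rpow_neg ha.le,
    Real.rpow_natCast, ← inv_pow]

lemma u_ge {a : ℝ} {x : E} (hc : 0 < cc N) (ha : 0 < a) (hx : a ≤ ‖x‖) :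
    a^2 / cc N ≤ 1 + ‖x‖^2 / cc N := by
  have h1 : a^2 ≤ ‖x‖^2 := by nlinarith [norm_nonneg x]
  have h2 : a^2 / cc N ≤ ‖x‖^2 / cc N := by gcongr
  have h3 : (0:ℝ) ≤ ‖x‖^2 / cc N := by positivity
  linarith

lemma base_bound {a : ℝ} {x : E} (hc : 0 < cc N) (ha : 0 < a) (hx : a ≤ ‖x‖)
    {r : ℝ} (hr : 0 ≤ r) (m : ℕ) (hm : 2 * r = (m:ℝ)) :
    (1 + ‖x‖^2 / cc N) ^ (-r) ≤ cc N ^ r * (a⁻¹)^m := by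
  have hA : 0 < a^2 / cc N := by positivity
  have h1 : (1 + ‖x‖^2 / cc N) ^ (-r) ≤ (a^2 / cc N) ^ (-r) :=
    Real.rpow_le_rpow_of_nonpos hA (u_ge hc ha hx) (by linarith)
  have h2 : (a^2 / cc N) ^ (-r) = cc N ^ r * (a⁻¹)^m := by
    rw [div_eq_mul_inv, Real.mul_rpow (by positivity) (by positivity),
      Real.inv_rpow hc.le, Real.rpow_neg hc.le, inv_inv, rpow_nat_inv ha m hm]
    ring
  linarith

lemma W_decay (hN : N = 3 ∨ N = 4) {a : ℝ} {x : E} (ha : 0 < a) (hx : a ≤ ‖x‖) :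
    W N x ≤ cc N ^ ss N * (a⁻¹)^(N-2) := by
  have hn : (2:ℝ) < (N:ℝ) := by rcases hN with h | h <;> (rw [h]; norm_num)
  have hc : 0 < cc N := by unfold cc; nlinarith
  have hm : 2 * ss N = ((N-2:ℕ):ℝ) := by
    have h2 : 2 ≤ N := by rcases hN with h | h <;> omega
    unfold ss; push_cast [h2]; ring
  have := base_bound hc ha hx (r := ss N) (by unfold ss; linarith) (N-2) hm
  exact this

lemma D1W_decay (hN : N = 3 ∨ N = 4) {a : ℝ} {x : E} (ha : 0 < a) (hx : a ≤ ‖x‖)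
    (hx2 : ‖x‖ ≤ 2*a) (i : Fin N) :
    |g1 (cc N) (ss N) (‖x‖^2) * (2 * x i)|
      ≤ (4 * ss N * cc N ^ ss N) * a * (a⁻¹)^N := by
  have hn : (2:ℝ) < (N:ℝ) := by rcases hN with h | h <;> (rw [h]; norm_num)
  have hc : 0 < cc N := by unfold cc; nlinarith
  have hs : 0 < ss N := by unfold ss; linarith
  have hm : 2 * (ss N + 1) = ((N:ℕ):ℝ) := by unfold ss; push_cast; ring
  have hb := base_bound hc ha hx (r := ss N + 1) (by linarith) N hm
  have hu : 0 < 1 + ‖x‖^2 / cc N := upos hc (by positivity)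
  have hg1 : |g1 (cc N) (ss N) (‖x‖^2)| = (ss N/cc N) * (1 + ‖x‖^2/cc N) ^ (-(ss N + 1)) := by
    unfold g1
    rw [abs_mul, abs_of_pos (Real.rpow_pos_of_pos hu _), abs_div, abs_neg,
      abs_of_pos hs, abs_of_pos hc]
    congr 2
    ring
  rw [abs_mul, hg1]
  have hxi : |2 * x i| ≤ 4 * a := by
    rw [abs_mul]
    have := coord_le_norm x i
    have : |x i| ≤ 2*a := le_trans this hx2
    rw [abs_two]
    linarith
  have h1 : (ss N/cc N) * (1 + ‖x‖^2/cc N) ^ (-(ss N + 1))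
      ≤ (ss N/cc N) * (cc N ^ (ss N + 1) * (a⁻¹)^N) := by
    apply mul_le_mul_of_nonneg_left hb (by positivity)
  have hpos : 0 ≤ (ss N/cc N) * (1 + ‖x‖^2/cc N) ^ (-(ss N + 1)) := by positivity
  calc (ss N/cc N) * (1 + ‖x‖^2/cc N) ^ (-(ss N + 1)) * |2 * x i|
      ≤ ((ss N/cc N) * (cc N ^ (ss N + 1) * (a⁻¹)^N)) * (4*a) := by
        apply mul_le_mul h1 hxi (abs_nonneg _) (by positivity)
    _ = (4 * ss N * cc N ^ ss N) * a * (a⁻¹)^N := by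
        rw [Real.rpow_add hc]
        rw [Real.rpow_one]
        field_simp

noncomputable def K0 (N : ℕ) (M1 M2 Mχ : ℝ) : ℝ :=
  (2*(N:ℝ)*M1*(4*ss N*cc N^ss N) + (N:ℝ)*M2*(cc N^ss N)) * (Mχ * cc N ^ ss N)

lemma Err_bound (hN : N = 3 ∨ N = 4) (hχ : ContDiff ℝ (⊤ : ℕ∞) χ)
    (hone : ∀ x : E, ‖x‖ ≤ 1 → χ x = 1) (hzero : ∀ x : E, 2 ≤ ‖x‖ → χ x = 0)
    {M1 M2 Mχ : ℝ} (hM1 : ∀ (i : Fin N) (z : E), |P1 N χ i z| ≤ M1)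
    (hM2 : ∀ (i : Fin N) (z : E), |P2 N χ i z| ≤ M2)
    (hMχ : ∀ z : E, |χ z| ≤ Mχ)
    {a : ℝ} (ha : 1 ≤ a) (x : E) :
    |(2 * SS N χ a x + W N x * LL N χ a x) * (χ (a⁻¹ • x) * W N x)|
      ≤ K0 N M1 M2 Mχ * (a⁻¹)^(2*N-2) := by
  have hn : (2:ℝ) < (N:ℝ) := by rcases hN with h | h <;> (rw [h]; norm_num)
  have hc : 0 < cc N := by unfold cc; nlinarith
  have hs : 0 < ss N := by unfold ss; linarith
  have ha0 : 0 < a := by linarith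
  have hA : 0 < a⁻¹ := by positivity
  have hM1p : 0 ≤ M1 := le_trans (abs_nonneg _) (hM1 ⟨0, by omega⟩ 0)
  have hM2p : 0 ≤ M2 := le_trans (abs_nonneg _) (hM2 ⟨0, by omega⟩ 0)
  have hMχp : 0 ≤ Mχ := le_trans (abs_nonneg _) (hMχ 0)
  have hCW : (0:ℝ) < cc N ^ ss N := Real.rpow_pos_of_pos hc _
  have hK0 : 0 ≤ K0 N M1 M2 Mχ := by
    unfold K0
    have h1 : (0:ℝ) ≤ 2*(N:ℝ)*M1*(4*ss N*cc N^ss N) := by positivity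
    have h2 : (0:ℝ) ≤ (N:ℝ)*M2*(cc N^ss N) := by positivity
    have h3 : (0:ℝ) ≤ Mχ * cc N ^ ss N := by positivity
    nlinarith
  have hnorm : ‖a⁻¹ • x‖ = a⁻¹ * ‖x‖ := by
    rw [norm_smul, Real.norm_eq_abs, abs_of_pos hA]
  by_cases h1 : ‖x‖ ≤ a
  · have hz : ‖a⁻¹ • x‖ ≤ 1 := by
      rw [hnorm]
      calc a⁻¹ * ‖x‖ ≤ a⁻¹ * a := by
            apply mul_le_mul_of_nonneg_left h1 hA.le
        _ = 1 := inv_mul_cancel₀ (ne_of_gt ha0)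
    have hSS : SS N χ a x = 0 := by
      unfold SS
      apply Finset.sum_eq_zero
      intro i _
      rw [P1_zero_inner hχ hone i _ hz]
      ring
    have hLL : LL N χ a x = 0 := by
      unfold LL
      rw [Finset.sum_eq_zero fun i _ => P2_zero_inner hχ hone i _ hz]
      ring
    rw [hSS, hLL]
    simp
    positivity
  by_cases h2 : 2*a < ‖x‖
  · have hz : (2:ℝ) < ‖a⁻¹ • x‖ := by
      rw [hnorm]
      have : a⁻¹ * (2*a) < a⁻¹ * ‖x‖ := by
        apply mul_lt_mul_of_pos_left h2 hA
      have heq : a⁻¹ * (2*a) = 2 := by field_simp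
      linarith
    have hSS : SS N χ a x = 0 := by
      unfold SS
      apply Finset.sum_eq_zero
      intro i _
      rw [P1_zero_outer hχ hzero i _ hz]
      ring
    have hLL : LL N χ a x = 0 := by
      unfold LL
      rw [Finset.sum_eq_zero fun i _ => P2_zero_outer hχ hzero i _ hz]
      ring
    rw [hSS, hLL]
    simp
    positivity
  -- middle case
  push_neg at h1 h2
  have hx1 : a ≤ ‖x‖ := h1.le
  have hx2 : ‖x‖ ≤ 2*a := h2
  set A := a⁻¹ with hAdef
  set C1 := 4 * ss N * cc N ^ ss N with hC1
  set CW := cc N ^ ss N with hCWdef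
  have hC1p : 0 < C1 := by positivity
  have hW := W_decay hN ha0 hx1
  have hWpos := W_pos hc x
  have hD1W := fun i => D1W_decay hN ha0 hx1 hx2 i
  have hSS : |SS N χ a x| ≤ (N:ℝ) * (M1 * (C1 * A^N)) := by
    unfold SS
    calc |∑ i, (a⁻¹ * P1 N χ i (a⁻¹ • x)) * (g1 (cc N) (ss N) (‖x‖^2) * (2 * x i))|
        ≤ ∑ i, |(a⁻¹ * P1 N χ i (a⁻¹ • x)) * (g1 (cc N) (ss N) (‖x‖^2) * (2 * x i))| :=
          Finset.abs_sum_le_sum_abs _ _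
      _ ≤ ∑ _i : Fin N, (A * M1) * (C1 * a * A^N) := by
          apply Finset.sum_le_sum
          intro i _
          rw [abs_mul, abs_mul, abs_of_pos hA]
          apply mul_le_mul
          · exact mul_le_mul_of_nonneg_left (hM1 i _) hA.le
          · exact hD1W i
          · exact abs_nonneg _
          · positivity
      _ = (N:ℝ) * ((A * M1) * (C1 * a * A^N)) := by
          rw [Finset.sum_const, Finset.card_univ, Fintype.card_fin, nsmul_eq_mul]
      _ = (N:ℝ) * (M1 * (C1 * A^N)) := by
          have h : A * a = 1 := inv_mul_cancel₀ (ne_of_gt ha0)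
          calc (N:ℝ) * ((A * M1) * (C1 * a * A^N))
              = ((N:ℝ) * (M1 * (C1 * A^N))) * (A*a) := by ring
            _ = (N:ℝ) * (M1 * (C1 * A^N)) := by rw [h, mul_one]
  have hLL : |LL N χ a x| ≤ A^2 * ((N:ℝ) * M2) := by
    unfold LL
    rw [abs_mul, abs_pow, abs_of_pos hA]
    apply mul_le_mul_of_nonneg_left _ (by positivity)
    calc |∑ i, P2 N χ i (a⁻¹ • x)| ≤ ∑ i, |P2 N χ i (a⁻¹ • x)| := Finset.abs_sum_le_sum_abs _ _
      _ ≤ ∑ _i : Fin N, M2 := Finset.sum_le_sum fun i _ => hM2 i _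
      _ = (N:ℝ) * M2 := by
          rw [Finset.sum_const, Finset.card_univ, Fintype.card_fin, nsmul_eq_mul]
  have hNge : 2 ≤ N := by rcases hN with h | h <;> omega
  have hApow : A^(N-2) * A^2 = A^N := by
    rw [← pow_add]
    congr 1
    omega
  have hApow2 : A^N * A^(N-2) = A^(2*N-2) := by
    rw [← pow_add]
    congr 1
    omega
  have hfac1 : |2 * SS N χ a x + W N x * LL N χ a x|
      ≤ (2 * ((N:ℝ) * (M1 * (C1 * A^N))) + (N:ℝ)*M2*CW * A^N) := by
    calc |2 * SS N χ a x + W N x * LL N χ a x|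
        ≤ |2 * SS N χ a x| + |W N x * LL N χ a x| := abs_add_le _ _
      _ ≤ 2 * ((N:ℝ) * (M1 * (C1 * A^N))) + (CW * A^(N-2)) * (A^2 * ((N:ℝ) * M2)) := by
          apply add_le_add
          · rw [abs_mul, abs_two]
            exact mul_le_mul_of_nonneg_left hSS (by norm_num)
          · rw [abs_mul, abs_of_pos hWpos]
            apply mul_le_mul hW hLL (abs_nonneg _) (by positivity)
      _ = 2 * ((N:ℝ) * (M1 * (C1 * A^N))) + (N:ℝ)*M2*CW * (A^(N-2) * A^2) := by ring
      _ = _ := by rw [hApow]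
  have hfac2 : |χ (a⁻¹ • x) * W N x| ≤ Mχ * (CW * A^(N-2)) := by
    rw [abs_mul, abs_of_pos hWpos]
    apply mul_le_mul (hMχ _) hW hWpos.le hMχp
  calc |(2 * SS N χ a x + W N x * LL N χ a x) * (χ (a⁻¹ • x) * W N x)|
      = |2 * SS N χ a x + W N x * LL N χ a x| * |χ (a⁻¹ • x) * W N x| := abs_mul _ _
    _ ≤ (2 * ((N:ℝ) * (M1 * (C1 * A^N))) + (N:ℝ)*M2*CW * A^N) * (Mχ * (CW * A^(N-2))) := by
        apply mul_le_mul hfac1 hfac2 (abs_nonneg _)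
        positivity
    _ = K0 N M1 M2 Mχ * (A^N * A^(N-2)) := by unfold K0; ring
    _ = K0 N M1 M2 Mχ * A^(2*N-2) := by rw [hApow2]

noncomputable def MainF (N : ℕ) (χ : EuclideanSpace ℝ (Fin N) → ℝ) (a : ℝ)
    (x : EuclideanSpace ℝ (Fin N)) : ℝ :=
  ((((N:ℝ)+2)/((N:ℝ) - 2)) - 1) * χ (a⁻¹ • x)^2
    * (W N x ^ (((N:ℝ)+2)/((N:ℝ) - 2)) * W N x)

noncomputable def ErrF (N : ℕ) (χ : EuclideanSpace ℝ (Fin N) → ℝ) (a : ℝ)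
    (x : EuclideanSpace ℝ (Fin N)) : ℝ :=
  (2 * SS N χ a x + W N x * LL N χ a x) * (χ (a⁻¹ • x) * W N x)

lemma base_cont (hc : 0 < cc N) (r : ℝ) :
    Continuous (fun x : E => (1 + ‖x‖^2 / cc N) ^ r) := by
  apply Continuous.rpow_const
  · exact continuous_const.add ((continuous_norm.pow 2).div_const _)
  · intro x
    exact Or.inl (ne_of_gt (upos hc (by positivity)))

lemma W_cont (hc : 0 < cc N) : Continuous (W N) := base_cont hc _

lemma coord_cont (i : Fin N) : Continuous (fun x : E => x i) :=
  (EuclideanSpace.proj (𝕜 := ℝ) i).continuous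

lemma chia_cont (hχ : ContDiff ℝ (⊤ : ℕ∞) χ) (a : ℝ) :
    Continuous (fun x : E => χ (a⁻¹ • x)) :=
  (hχ.continuous).comp (continuous_const_smul _)

lemma SS_cont (hc : 0 < cc N) (hχ : ContDiff ℝ (⊤ : ℕ∞) χ) (a : ℝ) :
    Continuous (SS N χ a) := by
  unfold SS
  apply continuous_finset_sum
  intro i _
  apply Continuous.mul
  · exact continuous_const.mul ((P1_cont hχ i).comp (continuous_const_smul _))
  · apply Continuous.mul
    · exact (continuous_const.mul (base_cont hc (-(ss N)-1)))
    · exact continuous_const.mul (coord_cont i)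

lemma LL_cont (hχ : ContDiff ℝ (⊤ : ℕ∞) χ) (a : ℝ) : Continuous (LL N χ a) := by
  unfold LL
  apply Continuous.mul continuous_const
  apply continuous_finset_sum
  intro i _
  exact ((P2_contDiff hχ i).continuous).comp (continuous_const_smul _)

lemma MainF_cont (hc : 0 < cc N) (hχ : ContDiff ℝ (⊤ : ℕ∞) χ) (a : ℝ) :
    Continuous (MainF N χ a) := by
  unfold MainF
  apply Continuous.mul
  · exact continuous_const.mul ((chia_cont hχ a).pow 2)
  · apply Continuous.mul _ (W_cont hc)
    apply Continuous.rpow_const (W_cont hc)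
    intro x
    exact Or.inl (ne_of_gt (W_pos hc x))

lemma ErrF_cont (hc : 0 < cc N) (hχ : ContDiff ℝ (⊤ : ℕ∞) χ) (a : ℝ) :
    Continuous (ErrF N χ a) := by
  unfold ErrF
  exact ((continuous_const.mul (SS_cont hc hχ a)).add
    ((W_cont hc).mul (LL_cont hχ a))).mul ((chia_cont hχ a).mul (W_cont hc))

lemma chia_zero_outside (hzero : ∀ x : E, 2 ≤ ‖x‖ → χ x = 0) {a : ℝ} (ha : 0 < a)
    {x : E} (hx : 2*a < ‖x‖) : χ (a⁻¹ • x) = 0 := by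
  apply hzero
  rw [norm_smul, Real.norm_eq_abs, abs_of_pos (by positivity : (0:ℝ) < a⁻¹)]
  rw [show (2:ℝ) = a⁻¹ * (2*a) by field_simp]
  apply mul_le_mul_of_nonneg_left hx.le (by positivity)

lemma MainF_support (hzero : ∀ x : E, 2 ≤ ‖x‖ → χ x = 0) {a : ℝ} (ha : 0 < a) :
    ∀ x : E, x ∉ Metric.closedBall (0:E) (2*a) → MainF N χ a x = 0 := by
  intro x hx
  rw [Metric.mem_closedBall, not_le, dist_zero_right] at hx
  unfold MainF
  rw [chia_zero_outside hzero ha hx]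
  ring

lemma ErrF_support (hzero : ∀ x : E, 2 ≤ ‖x‖ → χ x = 0) {a : ℝ} (ha : 0 < a) :
    ∀ x : E, x ∉ Metric.closedBall (0:E) (2*a) → ErrF N χ a x = 0 := by
  intro x hx
  rw [Metric.mem_closedBall, not_le, dist_zero_right] at hx
  unfold ErrF
  rw [chia_zero_outside hzero ha hx]
  ring

lemma MainF_integrable (hc : 0 < cc N) (hχ : ContDiff ℝ (⊤ : ℕ∞) χ)
    (hzero : ∀ x : E, 2 ≤ ‖x‖ → χ x = 0) {a : ℝ} (ha : 0 < a) :
    Integrable (MainF N χ a) := by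
  apply (MainF_cont hc hχ a).integrable_of_hasCompactSupport
  apply HasCompactSupport.intro (isCompact_closedBall (0:E) (2*a))
  exact MainF_support hzero ha

lemma ErrF_integrable (hc : 0 < cc N) (hχ : ContDiff ℝ (⊤ : ℕ∞) χ)
    (hzero : ∀ x : E, 2 ≤ ‖x‖ → χ x = 0) {a : ℝ} (ha : 0 < a) :
    Integrable (ErrF N χ a) := by
  apply (ErrF_cont hc hχ a).integrable_of_hasCompactSupport
  apply HasCompactSupport.intro (isCompact_closedBall (0:E) (2*a))
  exact ErrF_support hzero ha

noncomputable def c0 (N : ℕ) : ℝ :=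
  ((((N:ℝ)+2)/((N:ℝ) - 2)) - 1)
    * (((1+1/cc N) ^ (-(ss N))) ^ (((N:ℝ)+2)/((N:ℝ) - 2)) * (1+1/cc N) ^ (-(ss N)))
    * (volume (Metric.ball (0:EuclideanSpace ℝ (Fin N)) 1)).toReal

lemma pp_gt_one (hN : N = 3 ∨ N = 4) : 1 < ((N:ℝ)+2)/((N:ℝ) - 2) := by
  rcases hN with h | h <;> (rw [h]; norm_num)

lemma MainF_nonneg (hN : N = 3 ∨ N = 4) (hc : 0 < cc N) (a : ℝ) (x : E) :
    0 ≤ MainF N χ a x := by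
  have h1 := pp_gt_one (N := N) hN
  unfold MainF
  have h2 : (0:ℝ) < W N x ^ (((N:ℝ)+2)/((N:ℝ) - 2)) * W N x :=
    mul_pos (Real.rpow_pos_of_pos (W_pos hc x) _) (W_pos hc x)
  have h3 : (0:ℝ) ≤ χ (a⁻¹ • x)^2 := sq_nonneg _
  exact mul_nonneg (mul_nonneg (by linarith) h3) h2.le

lemma w0_pos (hc : 0 < cc N) : (0:ℝ) < (1+1/cc N) ^ (-(ss N)) :=
  Real.rpow_pos_of_pos (by positivity) _

lemma c0_pos (hN : N = 3 ∨ N = 4) (hc : 0 < cc N) : 0 < c0 N := by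
  have h1 := pp_gt_one (N := N) hN
  have h2 := w0_pos (N := N) hc
  unfold c0
  have h3 : (0:ℝ) < ((1+1/cc N) ^ (-(ss N))) ^ (((N:ℝ)+2)/((N:ℝ) - 2)) :=
    Real.rpow_pos_of_pos h2 _
  have h4 : 0 < (volume (Metric.ball (0:E) 1)).toReal := by
    apply ENNReal.toReal_pos (ne_of_gt (Metric.measure_ball_pos volume 0 one_pos))
      measure_ball_lt_top.ne
  exact mul_pos (mul_pos (by linarith) (mul_pos h3 h2)) h4

lemma Main_integral_lb (hN : N = 3 ∨ N = 4) (hc : 0 < cc N) (hχ : ContDiff ℝ (⊤ : ℕ∞) χ)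
    (hone : ∀ x : E, ‖x‖ ≤ 1 → χ x = 1) (hzero : ∀ x : E, 2 ≤ ‖x‖ → χ x = 0)
    {a : ℝ} (ha : 1 ≤ a) :
    c0 N ≤ ∫ x, MainF N χ a x := by
  have ha0 : (0:ℝ) < a := by linarith
  have h1 : ∫ x in Metric.ball (0:E) 1, MainF N χ a x ≤ ∫ x, MainF N χ a x :=
    setIntegral_le_integral (MainF_integrable hc hχ hzero ha0)
      (Filter.Eventually.of_forall (MainF_nonneg hN hc a))
  have h2 : ((((N:ℝ)+2)/((N:ℝ) - 2)) - 1)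
      * (((1+1/cc N) ^ (-(ss N))) ^ (((N:ℝ)+2)/((N:ℝ) - 2)) * (1+1/cc N) ^ (-(ss N)))
      * (volume (Metric.ball (0:E) 1)).toReal
      ≤ ∫ x in Metric.ball (0:E) 1, MainF N χ a x := by
    apply setIntegral_ge_of_const_le_real measurableSet_ball measure_ball_lt_top.ne
    · intro x hx
      rw [Metric.mem_ball, dist_zero_right] at hx
      have hχ1 : χ (a⁻¹ • x) = 1 := by
        apply hone
        rw [norm_smul, Real.norm_eq_abs, abs_of_pos (by positivity : (0:ℝ) < a⁻¹)]
        have hinv : a⁻¹ ≤ 1 := by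
          rw [inv_le_one_iff₀]; right; exact ha
        nlinarith [norm_nonneg x]
      have hWlb : (1+1/cc N) ^ (-(ss N)) ≤ W N x := by
        have hb : 1 + ‖x‖^2/cc N ≤ 1 + 1/cc N := by
          have hx1 : ‖x‖^2 ≤ 1 := by nlinarith [norm_nonneg x]
          have hdiv : ‖x‖^2/cc N ≤ 1/cc N := by gcongr
          linarith
        exact Real.rpow_le_rpow_of_nonpos (upos hc (by positivity)) hb
          (by unfold ss; rcases hN with h | h <;> (rw [h]; norm_num))
      have hw0 := w0_pos (N := N) hc
      have hWpos := W_pos hc x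
      have hpow : ((1+1/cc N) ^ (-(ss N))) ^ (((N:ℝ)+2)/((N:ℝ) - 2))
          ≤ W N x ^ (((N:ℝ)+2)/((N:ℝ) - 2)) := by
        apply Real.rpow_le_rpow hw0.le hWlb
        have := pp_gt_one (N := N) hN
        linarith
      unfold MainF
      rw [hχ1]
      have h5 : ((1+1/cc N) ^ (-(ss N))) ^ (((N:ℝ)+2)/((N:ℝ) - 2)) * (1+1/cc N) ^ (-(ss N))
          ≤ W N x ^ (((N:ℝ)+2)/((N:ℝ) - 2)) * W N x := by
        apply mul_le_mul hpow hWlb hw0.le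
        positivity
      have h6 : (0:ℝ) ≤ (((N:ℝ)+2)/((N:ℝ) - 2)) - 1 := by
        linarith [pp_gt_one (N := N) hN]
      calc ((((N:ℝ)+2)/((N:ℝ) - 2)) - 1)
            * (((1+1/cc N) ^ (-(ss N))) ^ (((N:ℝ)+2)/((N:ℝ) - 2)) * (1+1/cc N) ^ (-(ss N)))
          ≤ ((((N:ℝ)+2)/((N:ℝ) - 2)) - 1) * (W N x ^ (((N:ℝ)+2)/((N:ℝ) - 2)) * W N x) :=
            mul_le_mul_of_nonneg_left h5 h6
        _ = ((((N:ℝ)+2)/((N:ℝ) - 2)) - 1) * 1^2 * (W N x ^ (((N:ℝ)+2)/((N:ℝ) - 2)) * W N x) := by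
            ring
    · exact (MainF_integrable hc hχ hzero ha0).integrableOn
  unfold c0
  linarith

lemma Err_integral_bound (hN : N = 3 ∨ N = 4) (hc : 0 < cc N) (hχ : ContDiff ℝ (⊤ : ℕ∞) χ)
    (hone : ∀ x : E, ‖x‖ ≤ 1 → χ x = 1) (hzero : ∀ x : E, 2 ≤ ‖x‖ → χ x = 0)
    {M1 M2 Mχ : ℝ} (hM1 : ∀ (i : Fin N) (z : E), |P1 N χ i z| ≤ M1)
    (hM2 : ∀ (i : Fin N) (z : E), |P2 N χ i z| ≤ M2)
    (hMχ : ∀ z : E, |χ z| ≤ Mχ)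
    {a : ℝ} (ha : 1 ≤ a) :
    |∫ x, ErrF N χ a x|
      ≤ (K0 N M1 M2 Mχ * 2^N * (volume (Metric.ball (0:E) 1)).toReal) * a⁻¹ := by
  have ha0 : (0:ℝ) < a := by linarith
  have hA : (0:ℝ) < a⁻¹ := by positivity
  have hA1 : a⁻¹ ≤ 1 := by rw [inv_le_one_iff₀]; right; exact ha
  have hNge : 2 ≤ N := by rcases hN with h | h <;> omega
  have hK0 : 0 ≤ K0 N M1 M2 Mχ := by
    have hn : (2:ℝ) < (N:ℝ) := by rcases hN with h | h <;> (rw [h]; norm_num)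
    have hs : 0 < ss N := by unfold ss; linarith
    have hM1p : 0 ≤ M1 := le_trans (abs_nonneg _) (hM1 ⟨0, by omega⟩ 0)
    have hM2p : 0 ≤ M2 := le_trans (abs_nonneg _) (hM2 ⟨0, by omega⟩ 0)
    have hMχp : 0 ≤ Mχ := le_trans (abs_nonneg _) (hMχ 0)
    have hCW : (0:ℝ) < cc N ^ ss N := Real.rpow_pos_of_pos hc _
    unfold K0
    have h1 : (0:ℝ) ≤ 2*(N:ℝ)*M1*(4*ss N*cc N^ss N) := by positivity
    have h2 : (0:ℝ) ≤ (N:ℝ)*M2*(cc N^ss N) := by positivity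
    have h3 : (0:ℝ) ≤ Mχ * cc N ^ ss N := by positivity
    nlinarith
  have hint : ∫ x, ErrF N χ a x = ∫ x in Metric.closedBall (0:E) (2*a), ErrF N χ a x :=
    (setIntegral_eq_integral_of_forall_compl_eq_zero (ErrF_support hzero ha0)).symm
  rw [hint]
  have hb : ∀ x ∈ Metric.closedBall (0:E) (2*a),
      ‖ErrF N χ a x‖ ≤ K0 N M1 M2 Mχ * (a⁻¹)^(2*N-2) := by
    intro x _
    rw [Real.norm_eq_abs]
    exact Err_bound hN hχ hone hzero hM1 hM2 hMχ ha x
  have h1 := norm_setIntegral_le_of_norm_le_const (measure_closedBall_lt_top (μ := volume) (x := (0:E)) (r := 2*a))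
    hb
  rw [Real.norm_eq_abs] at h1
  unfold Measure.real at h1
  have hvol : (volume (Metric.closedBall (0:E) (2*a))).toReal
      = (2*a)^N * (volume (Metric.ball (0:E) 1)).toReal := by
    rw [Measure.addHaar_closedBall volume (0:E) (by positivity : (0:ℝ) ≤ 2*a)]
    rw [ENNReal.toReal_mul, ENNReal.toReal_ofReal (by positivity)]
    congr 2
    exact finrank_euclideanSpace_fin
  rw [hvol] at h1
  set V := (volume (Metric.ball (0:E) 1)).toReal with hV
  have hVpos : 0 ≤ V := ENNReal.toReal_nonneg
  have hkey : K0 N M1 M2 Mχ * (a⁻¹)^(2*N-2) * ((2*a)^N * V)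
      ≤ (K0 N M1 M2 Mχ * 2^N * V) * a⁻¹ := by
    have hsplit : (a⁻¹)^(2*N-2) = (a⁻¹)^(N-2) * (a⁻¹)^N := by
      rw [← pow_add]; congr 1; omega
    have hcancel : (a⁻¹)^N * a^N = 1 := by
      rw [← mul_pow, inv_mul_cancel₀ (ne_of_gt ha0), one_pow]
    have hmono : (a⁻¹)^(N-2) ≤ a⁻¹ := by
      calc (a⁻¹)^(N-2) ≤ (a⁻¹)^1 := pow_le_pow_of_le_one hA.le hA1 (by omega)
        _ = a⁻¹ := pow_one _
    calc K0 N M1 M2 Mχ * (a⁻¹)^(2*N-2) * ((2*a)^N * V)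
        = (K0 N M1 M2 Mχ * 2^N * V) * ((a⁻¹)^(N-2) * ((a⁻¹)^N * a^N)) := by
          rw [hsplit, mul_pow]; ring
      _ = (K0 N M1 M2 Mχ * 2^N * V) * (a⁻¹)^(N-2) := by rw [hcancel, mul_one]
      _ ≤ (K0 N M1 M2 Mχ * 2^N * V) * a⁻¹ := by
          apply mul_le_mul_of_nonneg_left hmono
          positivity
  linarith

end AT

open AT in
theorem stmt15 (N : ℕ) (hN : N ∈ ({3, 4} : Set ℕ))
    (χ : EuclideanSpace ℝ (Fin N) → ℝ)
    (hχ : ContDiff ℝ (⊤ : ℕ∞) χ)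
    (hrad : ∃ g : ℝ → ℝ, ∀ x, χ x = g ‖x‖)
    (hone : ∀ x, ‖x‖ ≤ 1 → χ x = 1)
    (hzero : ∀ x, 2 ≤ ‖x‖ → χ x = 0) :
    ∃ a > (0:ℝ),
      0 < ∫ x, (lap N (fun y => χ (a⁻¹ • y) * W N y) x
          + (((N:ℝ)+2)/((N:ℝ) - 2)) * W N x ^ ((((N:ℝ)+2)/((N:ℝ) - 2)) - 1)
            * (χ (a⁻¹ • x) * W N x)) * (χ (a⁻¹ • x) * W N x) := by
  simp only [Set.mem_insert_iff, Set.mem_singleton_iff] at hN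
  have hn : (2:ℝ) < (N:ℝ) := by rcases hN with h | h <;> (rw [h]; norm_num)
  have hc : 0 < cc N := by unfold cc; nlinarith
  have hs : 0 < ss N := by unfold ss; linarith
  have hNpos : 0 < N := by rcases hN with h | h <;> omega
  -- bounds
  obtain ⟨Mχ, hMχp, hMχ⟩ := exists_bound hχ.continuous (fun z hz => hzero z (by linarith))
  have hM1i : ∀ i : Fin N, ∃ M, 0 ≤ M ∧ ∀ z, |P1 N χ i z| ≤ M := fun i =>
    exists_bound (P1_cont hχ i) (P1_zero_outer hχ hzero i)
  have hM2i : ∀ i : Fin N, ∃ M, 0 ≤ M ∧ ∀ z, |P2 N χ i z| ≤ M := fun i =>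
    exists_bound (P2_contDiff hχ i).continuous (P2_zero_outer hχ hzero i)
  choose m1 hm1p hm1 using hM1i
  choose m2 hm2p hm2 using hM2i
  set M1 := ∑ i, m1 i with hM1def
  set M2 := ∑ i, m2 i with hM2def
  have hM1 : ∀ (i : Fin N) (z : EuclideanSpace ℝ (Fin N)), |P1 N χ i z| ≤ M1 := fun i z =>
    le_trans (hm1 i z) (Finset.single_le_sum (fun j _ => hm1p j) (Finset.mem_univ i))
  have hM2 : ∀ (i : Fin N) (z : EuclideanSpace ℝ (Fin N)), |P2 N χ i z| ≤ M2 := fun i z =>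
    le_trans (hm2 i z) (Finset.single_le_sum (fun j _ => hm2p j) (Finset.mem_univ i))
  set V := (volume (Metric.ball (0:EuclideanSpace ℝ (Fin N)) 1)).toReal with hVdef
  have hVpos : 0 ≤ V := ENNReal.toReal_nonneg
  have hK0 : 0 ≤ K0 N M1 M2 Mχ := by
    have hM1p : 0 ≤ M1 := Finset.sum_nonneg fun j _ => hm1p j
    have hM2p : 0 ≤ M2 := Finset.sum_nonneg fun j _ => hm2p j
    have hCW : (0:ℝ) < cc N ^ ss N := Real.rpow_pos_of_pos hc _
    unfold K0
    have h1 : (0:ℝ) ≤ 2*(N:ℝ)*M1*(4*ss N*cc N^ss N) := by positivity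
    have h2 : (0:ℝ) ≤ (N:ℝ)*M2*(cc N^ss N) := by positivity
    have h3 : (0:ℝ) ≤ Mχ * cc N ^ ss N := by positivity
    nlinarith
  set T := K0 N M1 M2 Mχ * 2^N * V with hTdef
  have hT : 0 ≤ T := by positivity
  have hc0 := c0_pos (N := N) hN hc
  set a := max 1 ((T+1)/c0 N) with hadef
  have ha1 : 1 ≤ a := le_max_left _ _
  have ha0 : (0:ℝ) < a := by linarith
  refine ⟨a, by linarith, ?_⟩
  have hrw : ∫ x, (lap N (fun y => χ (a⁻¹ • y) * W N y) x
          + (((N:ℝ)+2)/((N:ℝ) - 2)) * W N x ^ ((((N:ℝ)+2)/((N:ℝ) - 2)) - 1)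
            * (χ (a⁻¹ • x) * W N x)) * (χ (a⁻¹ • x) * W N x)
      = ∫ x, (MainF N χ a x + ErrF N χ a x) := by
    congr 1
    funext x
    rw [integrand_eq hN hχ a x]
    rfl
  rw [hrw, integral_add (MainF_integrable hc hχ hzero ha0) (ErrF_integrable hc hχ hzero ha0)]
  have hMain := Main_integral_lb hN hc hχ hone hzero ha1
  have hErr := Err_integral_bound hN hc hχ hone hzero hM1 hM2 hMχ ha1
  have haT : T * a⁻¹ < c0 N := by
    have hmax : (T+1)/c0 N ≤ a := le_max_right _ _
    have hfrac : (0:ℝ) < (T+1)/c0 N := by positivity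
    have hinv : a⁻¹ ≤ ((T+1)/c0 N)⁻¹ := by
      apply inv_anti₀ hfrac hmax
    rw [inv_div] at hinv
    have h2 : T * a⁻¹ ≤ T * (c0 N/(T+1)) := mul_le_mul_of_nonneg_left hinv hT
    have h3 : T * (c0 N/(T+1)) < c0 N := by
      rw [mul_div_assoc']
      rw [div_lt_iff₀ (by linarith : (0:ℝ) < T+1)]
      nlinarith
    linarith
  have hErr2 : -(c0 N) < ∫ x, ErrF N χ a x := by
    have := neg_abs_le (∫ x, ErrF N χ a x)
    have h4 : |∫ x, ErrF N χ a x| ≤ T * a⁻¹ := hErr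
    linarith
  linarith
end
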